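/- arXiv:2605.09377 — 3 statements merged into one kernel-verified Lean document; each statement's English description precedes it below -/
import Mathlib

section
/- Let d ≥ 3, β > 0, ξ ∈ (0,1) and σ ∈ (3/4,1). There exist constants T, c > 0 such that for every real t ≥ T and every y ∈ ℤ^d with ‖y‖ ≤ t^σ, one has p_{t − 2 t^ξ}^y ≤ c e^{β² t^ξ} p_t^y. (Lemma 3.5.) -/
open scoped BigOperators

noncomputable section

/-- `q d n z` : the `n`-step transition probability of the discrete-time simple symmetric
random walk on `ℤ^d`, from `0` to `z`. -/
def q (d : ℕ) : ℕ → (Fin d → ℤ) → ℝ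
  | 0, z => if z = 0 then 1 else 0
  | n + 1, z =>
      (1 / (2 * (d : ℝ))) *
        ∑ i : Fin d, (q d n (z - Pi.single i 1) + q d n (z + Pi.single i 1))

/-- Euclidean norm of a point of `ℤ^d`. -/
def eNorm {d : ℕ} (y : Fin d → ℤ) : ℝ :=
  Real.sqrt (∑ i, ((y i : ℝ)) ^ 2)

/-- `p d t y` : the time-`t` transition probability of the rate-1 continuous-time simple
symmetric random walk on `ℤ^d`, from `0` to `y`. -/
def p (d : ℕ) (t : ℝ) (y : Fin d → ℤ) : ℝ :=
  Real.exp (-t) * ∑' n : ℕ, t ^ n / (n.factorial : ℝ) * q d n y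

open Filter Finset

/-!
The Chapman–Kolmogorov inequality gives `p_t^y ≥ p_{2t^ξ}^0 · p_{t-2t^ξ}^y`, so it suffices that
the return probability `p_u^0` decays only polynomially in `u`. Since `q_m` is a probability
vector supported on the cube `[-m, m]^d`, Cauchy–Schwarz gives
`q_{2m}^0 ≥ ∑_w (q_m^w)² ≥ (2m+1)^{-d}`; comparing the even part of the series defining `p_u^0`
with that of `cosh u` then yields `p_u^0 ≥ 1 / (4 u^{2d})` for large `u`, a polynomial loss that
`e^{β² t^ξ}` absorbs.
-/

section DiscreteWalk

variable {d : ℕ}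

lemma q_zero (z : Fin d → ℤ) : q d 0 z = if z = 0 then 1 else 0 := rfl

lemma q_succ (n : ℕ) (z : Fin d → ℤ) :
    q d (n + 1) z =
      1 / (2 * (d : ℝ)) * ∑ i : Fin d, (q d n (z - Pi.single i 1) + q d n (z + Pi.single i 1)) :=
  rfl

lemma q_nonneg (n : ℕ) (z : Fin d → ℤ) : 0 ≤ q d n z := by
  induction n generalizing z with
  | zero => rw [q_zero]; split_ifs <;> norm_num
  | succ n ih =>
    rw [q_succ]
    exact mul_nonneg (by positivity) (sum_nonneg fun i _ => add_nonneg (ih _) (ih _))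

lemma q_le_one (n : ℕ) (z : Fin d → ℤ) : q d n z ≤ 1 := by
  induction n generalizing z with
  | zero => rw [q_zero]; split_ifs <;> norm_num
  | succ n ih =>
    rw [q_succ]
    calc _ ≤ 1 / (2 * (d : ℝ)) * ∑ _i : Fin d, (2 : ℝ) := by
          gcongr with i
          linarith [ih (z - Pi.single i 1), ih (z + Pi.single i 1)]
      _ ≤ 1 := by
          rcases d.eq_zero_or_pos with rfl | hd
          · simp
          · rw [sum_const, card_univ, Fintype.card_fin, nsmul_eq_mul]
            field_simp
            rfl

lemma q_neg (n : ℕ) (z : Fin d → ℤ) : q d n (-z) = q d n z := by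
  induction n generalizing z with
  | zero => simp only [q_zero, neg_eq_zero]
  | succ n ih =>
    simp only [q_succ]
    congr 1
    refine sum_congr rfl fun i _ => ?_
    rw [← neg_add', neg_add_eq_sub, ← neg_sub, ih, ih, add_comm]

def cube (d n : ℕ) : Finset (Fin d → ℤ) := Fintype.piFinset fun _ => Icc (-(n : ℤ)) n

lemma mem_cube {n : ℕ} {z : Fin d → ℤ} : z ∈ cube d n ↔ ∀ i, |z i| ≤ n := by
  simp [cube, abs_le]

lemma card_cube (d n : ℕ) : #(cube d n) = (2 * n + 1) ^ d := by
  simp only [cube, Fintype.card_piFinset, Int.card_Icc, prod_const, card_univ, Fintype.card_fin]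
  congr 1
  omega

lemma add_single_mem_cube {n : ℕ} {w : Fin d → ℤ} (hw : w ∈ cube d n) (i : Fin d) {c : ℤ}
    (hc : |c| ≤ 1) : w + Pi.single i c ∈ cube d (n + 1) := by
  rw [mem_cube] at hw ⊢
  intro j
  have hj : |(Pi.single i c : Fin d → ℤ) j| ≤ 1 := by
    rcases eq_or_ne j i with rfl | h
    · simpa using hc
    · simp [h]
  push_cast
  exact (abs_add_le _ _).trans (add_le_add (hw j) hj)

lemma sum_q_eq_one (hd : 0 < d) (n : ℕ) {S : Finset (Fin d → ℤ)} (hS : cube d n ⊆ S) :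
    ∑ z ∈ S, q d n z = 1 := by
  induction n generalizing S with
  | zero => simp [q_zero, hS (mem_cube.2 fun i => by simp : (0 : Fin d → ℤ) ∈ cube d 0)]
  | succ n ih =>
    have shift : ∀ (i : Fin d) (c : ℤ), |c| ≤ 1 → ∑ z ∈ S, q d n (z + Pi.single i c) = 1 := by
      intro i c hc
      rw [← sum_image (add_left_injective _).injOn]
      refine ih fun w hw => mem_image.2 ⟨w + Pi.single i (-c), hS ?_, ?_⟩
      · exact add_single_mem_cube hw i (by rwa [abs_neg])
      · rw [add_assoc, ← Pi.single_add, neg_add_cancel, Pi.single_zero, add_zero]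
    simp only [q_succ, ← mul_sum]
    rw [sum_comm]
    simp only [sum_add_distrib, sub_eq_add_neg, ← Pi.single_neg,
      shift _ _ (abs_neg (1 : ℤ) ▸ abs_one.le), shift _ _ abs_one.le, sum_const, card_univ,
      Fintype.card_fin, nsmul_eq_mul]
    field_simp
    norm_num

lemma sum_q_mul_q_le (a b : ℕ) (z : Fin d → ℤ) (S : Finset (Fin d → ℤ)) :
    ∑ w ∈ S, q d a w * q d b (z - w) ≤ q d (a + b) z := by
  induction b generalizing z with
  | zero =>
    simp only [q_zero, sub_eq_zero, mul_ite, mul_one, mul_zero, add_zero]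
    rw [sum_ite_eq]
    split_ifs
    exacts [le_rfl, q_nonneg a z]
  | succ b ih =>
    calc ∑ w ∈ S, q d a w * q d (b + 1) (z - w)
        = 1 / (2 * (d : ℝ)) * ∑ i : Fin d,
            (∑ w ∈ S, q d a w * q d b (z - Pi.single i 1 - w)
              + ∑ w ∈ S, q d a w * q d b (z + Pi.single i 1 - w)) := by
          simp only [q_succ, mul_sum, ← sum_add_distrib]
          rw [sum_comm]
          refine sum_congr rfl fun w _ => sum_congr rfl fun i _ => ?_
          rw [sub_right_comm, sub_add_eq_add_sub]
          ring
      _ ≤ 1 / (2 * (d : ℝ)) * ∑ i : Fin d,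
            (q d (a + b) (z - Pi.single i 1) + q d (a + b) (z + Pi.single i 1)) := by
          gcongr with i
          exacts [ih _, ih _]
      _ = q d (a + (b + 1)) z := (q_succ _ z).symm

lemma q_mul_q_le (a b : ℕ) (w z : Fin d → ℤ) : q d a w * q d b (z - w) ≤ q d (a + b) z := by
  simpa using sum_q_mul_q_le a b z {w}

lemma inv_le_q_two_mul_zero (hd : 0 < d) (m : ℕ) :
    (((2 * m + 1) ^ d : ℕ) : ℝ)⁻¹ ≤ q d (2 * m) 0 := by
  have hsq : ∑ w ∈ cube d m, q d m w ^ 2 ≤ q d (2 * m) 0 := by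
    simpa [sq, two_mul, q_neg] using sum_q_mul_q_le m m 0 (cube d m)
  have hcs : (1 : ℝ) ≤ #(cube d m) * ∑ w ∈ cube d m, q d m w ^ 2 := by
    simpa [sum_q_eq_one hd m le_rfl] using sq_sum_le_card_mul_sum_sq (s := cube d m) (f := q d m)
  rw [card_cube] at hcs
  rw [inv_le_iff_one_le_mul₀' (by positivity)]
  exact hcs.trans (by gcongr)

end DiscreteWalk

lemma sum_antidiagonal_pow_div_factorial_mul (u s : ℝ) (N : ℕ) :
    ∑ kl ∈ antidiagonal N, u ^ kl.1 / kl.1.factorial * (s ^ kl.2 / kl.2.factorial) =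
      (u + s) ^ N / N.factorial := by
  rw [(Commute.all u s).add_pow', sum_div]
  refine sum_congr rfl fun kl hkl => ?_
  rw [← mem_antidiagonal.mp hkl, nsmul_eq_mul, Nat.cast_add_choose]
  field_simp

section ContinuousWalk

variable {d : ℕ}

lemma summable_pow_div_factorial_mul_q (u : ℝ) (y : Fin d → ℤ) :
    Summable fun n : ℕ => u ^ n / n.factorial * q d n y := by
  refine Summable.of_norm_bounded (Real.summable_pow_div_factorial |u|) fun n => ?_
  rw [norm_mul, norm_div, norm_pow, Real.norm_eq_abs, RCLike.norm_natCast,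
    Real.norm_of_nonneg (q_nonneg n y)]
  exact mul_le_of_le_one_right (by positivity) (q_le_one n y)

lemma p_nonneg {t : ℝ} (ht : 0 ≤ t) (y : Fin d → ℤ) : 0 ≤ p d t y :=
  mul_nonneg (Real.exp_nonneg _) (tsum_nonneg fun n => mul_nonneg (by positivity) (q_nonneg n y))

lemma p_mul_p_le {u s : ℝ} (hu : 0 ≤ u) (hs : 0 ≤ s) (w y : Fin d → ℤ) :
    p d u w * p d s (y - w) ≤ p d (u + s) y := by
  have hf := (summable_pow_div_factorial_mul_q u w).norm
  have hg := (summable_pow_div_factorial_mul_q s (y - w)).norm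
  rw [p, p, p, neg_add, Real.exp_add, mul_mul_mul_comm,
    tsum_mul_tsum_eq_tsum_sum_antidiagonal_of_summable_norm hf hg]
  refine mul_le_mul_of_nonneg_left (Summable.tsum_le_tsum (fun N => ?_)
    (summable_norm_sum_mul_antidiagonal_of_summable_norm hf hg).of_norm
    (summable_pow_div_factorial_mul_q (u + s) y)) (by positivity)
  calc ∑ kl ∈ antidiagonal N,
        u ^ kl.1 / kl.1.factorial * q d kl.1 w * (s ^ kl.2 / kl.2.factorial * q d kl.2 (y - w))
      ≤ ∑ kl ∈ antidiagonal N,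
          u ^ kl.1 / kl.1.factorial * (s ^ kl.2 / kl.2.factorial) * q d N y := by
        refine sum_le_sum fun kl hkl => ?_
        rw [← mem_antidiagonal.mp hkl, mul_mul_mul_comm]
        gcongr
        exact q_mul_q_le _ _ w y
    _ = (u + s) ^ N / N.factorial * q d N y := by
        rw [← sum_mul, sum_antidiagonal_pow_div_factorial_mul]

lemma p_le_mul_p_of_inv_le_p_zero {u s K : ℝ} (hu : 0 ≤ u) (hs : 0 ≤ s) (hK : 0 < K)
    (h : K⁻¹ ≤ p d u 0) (y : Fin d → ℤ) : p d s y ≤ K * p d (u + s) y := by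
  have hCK := p_mul_p_le hu hs 0 y
  rw [sub_zero] at hCK
  rw [← inv_mul_le_iff₀ hK]
  exact (mul_le_mul_of_nonneg_right h (p_nonneg hs y)).trans hCK

lemma hasSum_cosh_tail (u : ℝ) (k : ℕ) :
    HasSum (fun m => u ^ (2 * (m + k)) / (2 * (m + k)).factorial)
      (Real.cosh u - ∑ i ∈ range k, u ^ (2 * i) / (2 * i).factorial) :=
  (hasSum_nat_add_iff' k).2 (Real.hasSum_cosh u)

lemma eventually_exp_div_four_le_cosh_sub (k : ℕ) :
    ∀ᶠ u in atTop,
      Real.exp u / 4 ≤ Real.cosh u - ∑ i ∈ range k, u ^ (2 * i) / (2 * i).factorial := by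
  have hpoly :
      (fun u : ℝ => ∑ i ∈ range k, u ^ (2 * i) / (2 * i).factorial) =o[atTop] Real.exp := by
    refine Asymptotics.IsLittleO.fun_sum fun i _ => ?_
    simpa only [div_eq_inv_mul] using Real.isLittleO_pow_exp_atTop.const_mul_left _
  filter_upwards [hpoly.bound (by norm_num : (0 : ℝ) < 1 / 4)] with u hu
  rw [Real.norm_of_nonneg (Real.exp_pos u).le] at hu
  have := (Real.le_norm_self _).trans hu
  have := Real.exp_pos (-u)
  rw [Real.cosh_eq]
  linarith

/-- Keeping only the even terms, `q_{2m}^0 ≥ (2m+1)^{-d}` and `(2m)! (2m+1)^d ≤ (2m+2d)!` compare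
the series of `e^u p_u^0` with the tail of the series of `cosh u`. -/
lemma cosh_tail_le_exp_mul_p_zero (hd : 0 < d) {u : ℝ} (hu : 0 < u) :
    (Real.cosh u - ∑ i ∈ range d, u ^ (2 * i) / (2 * i).factorial) / u ^ (2 * d) ≤
      ∑' n : ℕ, u ^ n / n.factorial * q d n 0 := by
  have htail := (hasSum_cosh_tail u d).div_const (u ^ (2 * d))
  have heven : ∀ m : ℕ, u ^ (2 * (m + d)) / (2 * (m + d)).factorial / u ^ (2 * d) =
      u ^ (2 * m) / (2 * m + 2 * d).factorial := fun m => by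
    rw [mul_add, pow_add]
    field_simp
  simp only [heven] at htail
  rw [← htail.tsum_eq]
  refine Summable.tsum_le_tsum_of_inj (fun m => 2 * m) (mul_right_injective₀ two_ne_zero)
    (fun n _ => mul_nonneg (by positivity) (q_nonneg n 0)) (fun m => ?_) htail.summable
    (summable_pow_div_factorial_mul_q u 0)
  have hfac :
      ((2 * m).factorial : ℝ) * (((2 * m + 1) ^ d : ℕ) : ℝ) ≤ (2 * m + 2 * d).factorial := by
    exact_mod_cast Nat.factorial_mul_pow_le_factorial.trans (Nat.factorial_le (by omega))
  calc u ^ (2 * m) / (2 * m + 2 * d).factorial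
      ≤ u ^ (2 * m) / ((2 * m).factorial * (((2 * m + 1) ^ d : ℕ) : ℝ)) := by gcongr
    _ = u ^ (2 * m) / (2 * m).factorial * (((2 * m + 1) ^ d : ℕ) : ℝ)⁻¹ := by
        rw [div_mul_eq_div_div, div_eq_mul_inv _ (((2 * m + 1) ^ d : ℕ) : ℝ)]
    _ ≤ u ^ (2 * m) / (2 * m).factorial * q d (2 * m) 0 := by
        gcongr
        exact inv_le_q_two_mul_zero hd m

lemma eventually_inv_le_p_zero (hd : 0 < d) : ∀ᶠ u in atTop, (4 * u ^ (2 * d))⁻¹ ≤ p d u 0 := by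
  filter_upwards [eventually_exp_div_four_le_cosh_sub d, eventually_gt_atTop 0] with u hcosh hu
  calc (4 * u ^ (2 * d))⁻¹ = Real.exp (-u) * (Real.exp u / 4 / u ^ (2 * d)) := by
        rw [Real.exp_neg]
        field_simp
    _ ≤ Real.exp (-u) * ∑' n : ℕ, u ^ n / n.factorial * q d n 0 := by
        gcongr
        exact (div_le_div_of_nonneg_right hcosh (by positivity)).trans
          (cosh_tail_le_exp_mul_p_zero hd hu)

end ContinuousWalk

lemma eventually_mul_pow_le_exp (C : ℝ) (k : ℕ) {b : ℝ} (hb : 0 < b) :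
    ∀ᶠ x in atTop, C * x ^ k ≤ Real.exp (b * x) := by
  filter_upwards [((isLittleO_pow_exp_pos_mul_atTop k hb).const_mul_left C).bound one_pos] with x hx
  rw [one_mul, Real.norm_of_nonneg (Real.exp_pos _).le] at hx
  exact (Real.le_norm_self _).trans hx

lemma eventually_const_mul_rpow_le_self (c : ℝ) {ξ : ℝ} (hξ : ξ < 1) :
    ∀ᶠ t : ℝ in atTop, c * t ^ ξ ≤ t := by
  filter_upwards [(tendsto_rpow_atTop (sub_pos.2 hξ)).eventually_ge_atTop c,
    eventually_gt_atTop 0] with t hc ht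
  calc c * t ^ ξ ≤ t ^ (1 - ξ) * t ^ ξ := by gcongr
    _ = t := by rw [← Real.rpow_add ht, sub_add_cancel, Real.rpow_one]

theorem stmt5_general (d : ℕ) (hd : 3 ≤ d) (β ξ σ : ℝ) (hβ : 0 < β)
    (hξ0 : 0 < ξ) (hξ1 : ξ < 1) :
    ∃ T c : ℝ, 0 < T ∧ 0 < c ∧
      ∀ t : ℝ, T ≤ t → ∀ y : Fin d → ℤ, eNorm y ≤ t ^ σ →
        p d (t - 2 * t ^ ξ) y ≤ c * Real.exp (β ^ 2 * t ^ ξ) * p d t y := by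
  have hx := tendsto_rpow_atTop hξ0
  have hreturn :=
    (hx.const_mul_atTop two_pos).eventually (eventually_inv_le_p_zero (d := d) (by omega))
  have hpoly := hx.eventually (eventually_mul_pow_le_exp (4 * 2 ^ (2 * d)) (2 * d) (pow_pos hβ 2))
  obtain ⟨T, hT⟩ := eventually_atTop.1 <| hreturn.and <| hpoly.and <|
    (eventually_const_mul_rpow_le_self 2 hξ1).and (eventually_gt_atTop 0)
  refine ⟨max T 1, 1, by positivity, one_pos, fun t ht y _ => ?_⟩
  obtain ⟨hret, hexp, hshort, ht0⟩ := hT t (le_of_max_le_left ht)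
  have hpow : 4 * (2 * t ^ ξ) ^ (2 * d) ≤ Real.exp (β ^ 2 * t ^ ξ) := by
    rwa [mul_pow, ← mul_assoc]
  calc p d (t - 2 * t ^ ξ) y ≤ 4 * (2 * t ^ ξ) ^ (2 * d) * p d (2 * t ^ ξ + (t - 2 * t ^ ξ)) y :=
        p_le_mul_p_of_inv_le_p_zero (by positivity) (by linarith) (by positivity) hret y
    _ ≤ 1 * Real.exp (β ^ 2 * t ^ ξ) * p d t y := by
        rw [add_sub_cancel, one_mul]
        exact mul_le_mul_of_nonneg_right hpow (p_nonneg ht0.le y)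

/-- Lemma 3.5: for `t` large and `‖y‖ ≤ t^σ`, `p_{t-2t^ξ}^y ≤ c e^{β² t^ξ} p_t^y`. -/
theorem stmt5 (d : ℕ) (hd : 3 ≤ d) (β ξ σ : ℝ) (hβ : 0 < β)
    (hξ0 : 0 < ξ) (hξ1 : ξ < 1) (hσ0 : 3 / 4 < σ) (hσ1 : σ < 1) :
    ∃ T c : ℝ, 0 < T ∧ 0 < c ∧
      ∀ t : ℝ, T ≤ t → ∀ y : Fin d → ℤ, eNorm y ≤ t ^ σ →
        p d (t - 2 * t ^ ξ) y ≤ c * Real.exp (β ^ 2 * t ^ ξ) * p d t y :=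
  stmt5_general d hd β ξ σ hβ hξ0 hξ1
end
end

section
/- Let 0 < β < 1. There exists a constant c > 0 such that for all real t ≥ c, all integers l ≥ 0 and all integers r with 1 ≤ r ≤ l + 1: A(t,l,r) ≤ c (l+1)² e^{β² t} β^{2r} t^r · l!/(l+r)!, i.e. A(t,l,r) ≤ c (l+1)² e^{β² t} β^{2r} t^r / ((l+1)(l+2)⋯(l+r)). (Lemma 4.3.) -/
open scoped BigOperators
open MeasureTheory

noncomputable section

/-- The open simplex `Δ(t,l) = {(t_1,…,t_l) ∈ (0,∞)^l : t_1 + ⋯ + t_l < t}`. -/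
def simplexSet (t : ℝ) (l : ℕ) : Set (Fin l → ℝ) :=
  {x | (∀ j, 0 < x j) ∧ ∑ j, x j < t}

/-- Extended coordinates: `t_0 := 0`, `t_j := x_{j-1}` for `1 ≤ j ≤ l`, and
`t_{l+1} := t - (t_1 + ⋯ + t_l)`. -/
def coordExt (t : ℝ) (l : ℕ) (x : Fin l → ℝ) (j : ℕ) : ℝ :=
  if hj : 1 ≤ j ∧ j ≤ l then x ⟨j - 1, by omega⟩
  else if j = 0 then 0 else t - ∑ i, x i

/-- The simplex integral
`I(t,l,r) = ∫_{Δ(t,l)} ∏_{j=1}^{r-2} (e^{β² t_j} − 1) · e^{β² (t_{r−1} + t_r)} dt_1 ⋯ dt_l`. -/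
def Iint (β t : ℝ) (l r : ℕ) : ℝ :=
  ∫ x in simplexSet t l,
    (∏ j ∈ Finset.Icc 1 (r - 2), (Real.exp (β ^ 2 * coordExt t l x j) - 1)) *
      Real.exp (β ^ 2 * (coordExt t l x (r - 1) + coordExt t l x r))

/-- `A(t,l,r) = (l!/t^l) I(t,l,r)` for `l ≥ 1`, and `A(t,0,1) = e^{β² t}`. -/
def Afun (β t : ℝ) (l r : ℕ) : ℝ :=
  if l = 0 then Real.exp (β ^ 2 * t)
  else (l.factorial : ℝ) / t ^ l * Iint β t l r

/-!
By `e^a - 1 ≤ a e^a` and `t_1 + ⋯ + t_r ≤ t`, the integrand of `I(t,l,r)` is at most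
`β^{2(r-2)} e^{β² t} t_1 ⋯ t_{r-2}`. The Dirichlet integral
`∫_{Δ(t,l)} t_1 ⋯ t_k (t - Σ t_i)^m = m! t^{l+k+m} / (l+k+m)!`, computed by integrating out one
coordinate at a time, then gives `A(t,l,r) ≤ e^{β² t} l! (β² t)^{r-2} / (l+r-2)!`.
For `t ≥ c = 1 + 2/β²` we have `β² t ≥ 2`, and since `r ≤ l + 1` the missing factor
`(l+r)(l+r-1) ≤ 4(l+1)²` is absorbed by `c (β² t)²`.
-/

open Set ENNReal
open scoped Nat

lemma lintegral_Ioo_sub_pow {s : ℝ} (hs : 0 < s) (m : ℕ) :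
    ∫⁻ u in Ioo 0 s, ENNReal.ofReal ((s - u) ^ m) =
      ENNReal.ofReal (m ! / (m + 1)! * s ^ (m + 1)) := by
  rw [← ofReal_integral_eq_lintegral_ofReal]
  · congr 1
    rw [← integral_Ioc_eq_integral_Ioo, ← intervalIntegral.integral_of_le hs.le,
      intervalIntegral.integral_comp_sub_left (fun v => v ^ m) s, sub_self, sub_zero,
      integral_pow, Nat.factorial_succ]
    push_cast
    field_simp
    simp
  · exact (by fun_prop : Continuous fun u : ℝ => (s - u) ^ m).integrableOn_Icc.mono_set
      Ioo_subset_Icc_self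
  · filter_upwards [ae_restrict_mem measurableSet_Ioo] with u hu
    exact pow_nonneg (by linarith [hu.2]) m

lemma lintegral_Ioo_mul_sub_pow {s : ℝ} (hs : 0 < s) (m : ℕ) :
    ∫⁻ u in Ioo 0 s, ENNReal.ofReal (u * (s - u) ^ m) =
      ENNReal.ofReal (m ! / (m + 2)! * s ^ (m + 2)) := by
  rw [← ofReal_integral_eq_lintegral_ofReal]
  · congr 1
    have hswap : (fun u => u * (s - u) ^ m) =
        fun u => (fun v => s * v ^ m - v ^ (m + 1)) (s - u) := by
      ext u; ring
    rw [← integral_Ioc_eq_integral_Ioo, ← intervalIntegral.integral_of_le hs.le, hswap,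
      intervalIntegral.integral_comp_sub_left (fun v => s * v ^ m - v ^ (m + 1)) s, sub_self,
      sub_zero, intervalIntegral.integral_sub
        ((intervalIntegral.intervalIntegrable_pow m).const_mul s)
        (intervalIntegral.intervalIntegrable_pow (m + 1)),
      intervalIntegral.integral_const_mul, integral_pow, integral_pow, Nat.factorial_succ,
      Nat.factorial_succ]
    push_cast
    field_simp
    ring
  · exact (by fun_prop : Continuous fun u : ℝ => u * (s - u) ^ m).integrableOn_Icc.mono_set
      Ioo_subset_Icc_self
  · filter_upwards [ae_restrict_mem measurableSet_Ioo] with u hu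
    exact mul_nonneg hu.1.le (pow_nonneg (by linarith [hu.2]) m)

lemma measurableSet_simplexSet (t : ℝ) (l : ℕ) : MeasurableSet (simplexSet t l) := by
  have hpos : MeasurableSet {x : Fin l → ℝ | ∀ j, 0 < x j} := by
    simp only [Set.ofPred_forall]
    exact MeasurableSet.iInter fun j => measurableSet_lt measurable_const (measurable_pi_apply j)
  exact hpos.inter
    (measurableSet_lt (Finset.measurable_sum _ fun i _ => measurable_pi_apply i) measurable_const)

lemma cons_mem_simplexSet_iff {t : ℝ} {l : ℕ} (u : ℝ) (y : Fin l → ℝ) :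
    Fin.cons u y ∈ simplexSet t (l + 1) ↔ y ∈ simplexSet t l ∧ u ∈ Ioo 0 (t - ∑ i, y i) := by
  simp only [simplexSet, Set.mem_ofPred_eq, Fin.forall_fin_succ, Fin.cons_zero, Fin.cons_succ,
    Fin.sum_cons, Set.mem_Ioo]
  constructor
  · rintro ⟨⟨hu, hy⟩, hsum⟩
    exact ⟨⟨hy, by linarith⟩, hu, by linarith⟩
  · rintro ⟨⟨hy, -⟩, hu, hsum⟩
    exact ⟨⟨hu, hy⟩, by linarith⟩

lemma lintegral_simplexSet_succ (t : ℝ) (l : ℕ) {g : (Fin (l + 1) → ℝ) → ℝ≥0∞}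
    (hg : Measurable g) :
    ∫⁻ x in simplexSet t (l + 1), g x =
      ∫⁻ y in simplexSet t l, ∫⁻ u in Ioo 0 (t - ∑ i, y i), g (Fin.cons u y) := by
  have hgS := hg.indicator (measurableSet_simplexSet t (l + 1))
  rw [← lintegral_indicator (measurableSet_simplexSet t (l + 1)),
    ← ((volume_preserving_piFinSuccAbove (fun _ : Fin (l + 1) => ℝ) 0).symm).lintegral_comp hgS,
    Measure.volume_eq_prod]
  refine (lintegral_prod_symm' _ (hgS.comp
    (MeasurableEquiv.piFinSuccAbove (fun _ : Fin (l + 1) => ℝ) 0).symm.measurable)).trans ?_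
  rw [← lintegral_indicator (measurableSet_simplexSet t l)]
  refine lintegral_congr fun y => ?_
  have hcons : ∀ u, (MeasurableEquiv.piFinSuccAbove (fun _ : Fin (l + 1) => ℝ) 0).symm (u, y) =
      Fin.cons u y := fun u => by
    simp [MeasurableEquiv.piFinSuccAbove_symm_apply, Fin.consEquiv]
  simp only [Function.comp_apply, hcons]
  by_cases hy : y ∈ simplexSet t l
  · rw [indicator_of_mem hy, ← lintegral_indicator measurableSet_Ioo]
    refine lintegral_congr fun u => ?_
    by_cases hu : u ∈ Ioo 0 (t - ∑ i, y i)
    · rw [indicator_of_mem hu, indicator_of_mem ((cons_mem_simplexSet_iff u y).2 ⟨hy, hu⟩)]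
    · rw [indicator_of_notMem hu,
        indicator_of_notMem fun h => hu ((cons_mem_simplexSet_iff u y).1 h).2]
  · rw [indicator_of_notMem hy]
    refine (lintegral_congr fun u => ?_).trans lintegral_zero
    exact indicator_of_notMem (fun h => hy ((cons_mem_simplexSet_iff u y).1 h).1) g

lemma lintegral_simplexSet_prod_mul_pow {t : ℝ} (ht : 0 < t) {k l : ℕ} (hk : k ≤ l) (m : ℕ) :
    ∫⁻ x in simplexSet t l,
        ENNReal.ofReal ((∏ i : Fin k, x (Fin.castLE hk i)) * (t - ∑ i, x i) ^ m) =
      ENNReal.ofReal (m ! / (l + k + m)! * t ^ (l + k + m)) := by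
  induction l generalizing k m with
  | zero =>
    obtain rfl : k = 0 := Nat.le_zero.mp hk
    have huniv : simplexSet t 0 = univ := by ext x; simp [simplexSet, ht]
    simp [huniv, volume_pi, Nat.factorial_ne_zero]
  | succ l ih =>
    rw [lintegral_simplexSet_succ t l (by fun_prop)]
    -- Integrating `u ^ a * (s - u) ^ m` (`a = 0, 1`) over `u = x 0` raises `m` by `a + 1`.
    have step : ∀ k' m' (hk' : k' ≤ l), l + k' + m' = l + 1 + k + m →
        (∀ y ∈ simplexSet t l, ∫⁻ u in Ioo 0 (t - ∑ i, y i), ENNReal.ofReal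
            ((∏ i : Fin k, (Fin.cons u y : Fin (l + 1) → ℝ) (Fin.castLE hk i)) *
              (t - ∑ i, (Fin.cons u y : Fin (l + 1) → ℝ) i) ^ m) =
          ENNReal.ofReal (m ! / m' !) *
            ENNReal.ofReal ((∏ i : Fin k', y (Fin.castLE hk' i)) * (t - ∑ i, y i) ^ m')) →
        ∫⁻ y in simplexSet t l, ∫⁻ u in Ioo 0 (t - ∑ i, y i), ENNReal.ofReal
            ((∏ i : Fin k, (Fin.cons u y : Fin (l + 1) → ℝ) (Fin.castLE hk i)) *
              (t - ∑ i, (Fin.cons u y : Fin (l + 1) → ℝ) i) ^ m) =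
          ENNReal.ofReal (m ! / (l + 1 + k + m)! * t ^ (l + 1 + k + m)) := by
      intro k' m' hk' hdeg hinner
      rw [setLIntegral_congr_fun (measurableSet_simplexSet t l) hinner,
        lintegral_const_mul' _ _ ofReal_ne_top, ih hk', ← ofReal_mul (by positivity), hdeg]
      congr 1
      field_simp
    cases k with
    | zero =>
      refine step 0 (m + 1) (Nat.zero_le l) (by ring) fun y hy => ?_
      simp only [Finset.univ_eq_empty, Finset.prod_empty, one_mul, Fin.sum_cons,
        sub_add_eq_sub_sub_swap]
      rw [lintegral_Ioo_sub_pow (sub_pos.2 hy.2), ← ofReal_mul (by positivity)]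
    | succ k =>
      have hk' : k ≤ l := by omega
      refine step k (m + 2) hk' (by ring) fun y hy => ?_
      have hW : 0 ≤ ∏ i : Fin k, y (Fin.castLE hk' i) :=
        Finset.prod_nonneg fun _ _ => (hy.1 _).le
      have hcons : ∀ u, (∏ i : Fin (k + 1), (Fin.cons u y : Fin (l + 1) → ℝ) (Fin.castLE hk i)) =
          u * ∏ i : Fin k, y (Fin.castLE hk' i) := fun u => by
        simp [Fin.prod_univ_succ]
      simp only [hcons, Fin.sum_cons, sub_add_eq_sub_sub_swap]
      set W := ∏ i : Fin k, y (Fin.castLE hk' i)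
      set s := t - ∑ i, y i
      have hsplit : ∀ u : ℝ, ENNReal.ofReal (u * W * (s - u) ^ m) =
          ENNReal.ofReal W * ENNReal.ofReal (u * (s - u) ^ m) := fun u => by
        rw [← ofReal_mul hW]; ring_nf
      simp only [hsplit]
      rw [lintegral_const_mul' _ _ ofReal_ne_top, lintegral_Ioo_mul_sub_pow (sub_pos.2 hy.2),
        ← ofReal_mul hW, ← ofReal_mul (by positivity)]
      congr 1
      ring

lemma exp_sub_one_le_mul_exp (x : ℝ) : Real.exp x - 1 ≤ x * Real.exp x := by
  have h := mul_le_mul_of_nonneg_right (Real.add_one_le_exp (-x)) (Real.exp_pos x).le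
  rw [← Real.exp_add, neg_add_cancel, Real.exp_zero] at h
  linarith

lemma prod_exp_sub_one_mul_exp_le {ι : Type*} (s : Finset ι) {τ : ι → ℝ}
    (hτ : ∀ i ∈ s, 0 ≤ τ i) {a b T : ℝ} (ha : 0 ≤ a) (hT : ∑ i ∈ s, τ i + b ≤ T) :
    (∏ i ∈ s, (Real.exp (a * τ i) - 1)) * Real.exp (a * b) ≤
      a ^ s.card * (∏ i ∈ s, τ i) * Real.exp (a * T) := by
  have hprod : ∏ i ∈ s, (Real.exp (a * τ i) - 1) ≤ ∏ i ∈ s, (a * τ i * Real.exp (a * τ i)) :=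
    Finset.prod_le_prod (fun i hi => sub_nonneg.2 (Real.one_le_exp (mul_nonneg ha (hτ i hi))))
      fun i _ => exp_sub_one_le_mul_exp _
  calc (∏ i ∈ s, (Real.exp (a * τ i) - 1)) * Real.exp (a * b)
      ≤ (∏ i ∈ s, (a * τ i * Real.exp (a * τ i))) * Real.exp (a * b) := by gcongr
    _ = a ^ s.card * (∏ i ∈ s, τ i) * Real.exp (a * (∑ i ∈ s, τ i + b)) := by
      rw [Finset.prod_mul_distrib, Finset.prod_mul_distrib, Finset.prod_const, ← Real.exp_sum,
        mul_add, Real.exp_add, Finset.mul_sum]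
      ring
    _ ≤ a ^ s.card * (∏ i ∈ s, τ i) * Real.exp (a * T) := by
      have := Finset.prod_nonneg hτ
      gcongr

section coordExt

variable {t : ℝ} {l : ℕ} {x : Fin l → ℝ}

lemma coordExt_zero : coordExt t l x 0 = 0 := by
  simp [coordExt]

lemma coordExt_succ (i : Fin l) : coordExt t l x (i + 1) = x i := by
  simp [coordExt]

lemma coordExt_last : coordExt t l x (l + 1) = t - ∑ i, x i := by
  simp [coordExt]

lemma sum_range_coordExt : ∑ j ∈ Finset.range (l + 2), coordExt t l x j = t := by
  rw [Finset.sum_range_succ, Finset.sum_range_succ', coordExt_zero, coordExt_last,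
    ← Fin.sum_univ_eq_sum_range (fun j => coordExt t l x (j + 1))]
  simp only [coordExt_succ]
  ring

lemma coordExt_nonneg (hx : x ∈ simplexSet t l) (j : ℕ) : 0 ≤ coordExt t l x j := by
  unfold coordExt
  split_ifs
  · exact (hx.1 _).le
  · exact le_rfl
  · linarith [hx.2]

lemma prod_Icc_coordExt {k : ℕ} (hk : k ≤ l) :
    ∏ j ∈ Finset.Icc 1 k, coordExt t l x j = ∏ i : Fin k, x (Fin.castLE hk i) := by
  rw [← Finset.Ico_add_one_right_eq_Icc, Finset.prod_Ico_eq_prod_range, Nat.add_sub_cancel,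
    ← Fin.prod_univ_eq_prod_range (fun j => coordExt t l x (1 + j))]
  refine Finset.prod_congr rfl fun i _ => ?_
  rw [add_comm, ← coordExt_succ (t := t) (x := x) (Fin.castLE hk i), Fin.val_castLE]

lemma sum_Icc_coordExt_add_le (hx : x ∈ simplexSet t l) {r : ℕ} (hr1 : 1 ≤ r)
    (hr2 : r ≤ l + 1) :
    ∑ j ∈ Finset.Icc 1 (r - 2), coordExt t l x j +
      (coordExt t l x (r - 1) + coordExt t l x r) ≤ t := by
  have hsub : insert (r - 1) (insert r (Finset.Icc 1 (r - 2))) ⊆ Finset.range (l + 2) := by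
    intro j hj
    simp only [Finset.mem_insert, Finset.mem_Icc, Finset.mem_range] at hj ⊢
    omega
  have hle := Finset.sum_le_sum_of_subset_of_nonneg hsub fun j _ _ => coordExt_nonneg hx j
  rw [Finset.sum_insert (by simp; omega), Finset.sum_insert (by simp; omega),
    sum_range_coordExt] at hle
  linarith

@[fun_prop]
lemma measurable_coordExt (j : ℕ) : Measurable fun x : Fin l → ℝ => coordExt t l x j := by
  unfold coordExt
  split_ifs
  · exact measurable_pi_apply _
  · exact measurable_const
  · exact measurable_const.sub (Finset.measurable_sum _ fun i _ => measurable_pi_apply i)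

end coordExt

lemma Iint_le (β : ℝ) {t : ℝ} (ht : 0 < t) {l r : ℕ} (hr1 : 1 ≤ r) (hr2 : r ≤ l + 1) :
    Iint β t l r ≤
      (β ^ 2) ^ (r - 2) * Real.exp (β ^ 2 * t) * (t ^ (l + (r - 2)) / (l + (r - 2))!) := by
  have hk : r - 2 ≤ l := by omega
  set f : (Fin l → ℝ) → ℝ := fun x =>
    (∏ j ∈ Finset.Icc 1 (r - 2), (Real.exp (β ^ 2 * coordExt t l x j) - 1)) *
      Real.exp (β ^ 2 * (coordExt t l x (r - 1) + coordExt t l x r))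
  set C := (β ^ 2) ^ (r - 2) * Real.exp (β ^ 2 * t)
  have hf : ∀ x ∈ simplexSet t l, 0 ≤ f x ∧
      f x ≤ C * ((∏ i : Fin (r - 2), x (Fin.castLE hk i)) * (t - ∑ i, x i) ^ 0) := by
    intro x hx
    refine ⟨mul_nonneg (Finset.prod_nonneg fun j _ => sub_nonneg.2 (Real.one_le_exp
      (mul_nonneg (sq_nonneg β) (coordExt_nonneg hx j)))) (Real.exp_pos _).le, ?_⟩
    have h := prod_exp_sub_one_mul_exp_le (Finset.Icc 1 (r - 2))
      (fun j _ => coordExt_nonneg hx j) (sq_nonneg β) (sum_Icc_coordExt_add_le hx hr1 hr2)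
    rw [Nat.card_Icc, Nat.add_sub_cancel, prod_Icc_coordExt hk] at h
    simpa [C, mul_right_comm _ (Real.exp _)] using h
  have hS := measurableSet_simplexSet t l
  rw [Iint, integral_eq_lintegral_of_nonneg_ae ((ae_restrict_iff' hS).2 (.of_forall
    fun x hx => (hf x hx).1)) (by fun_prop : Measurable f).aestronglyMeasurable]
  refine ENNReal.toReal_le_of_le_ofReal (by positivity) ?_
  calc ∫⁻ x in simplexSet t l, ENNReal.ofReal (f x)
      ≤ ∫⁻ x in simplexSet t l, ENNReal.ofReal C *
          ENNReal.ofReal ((∏ i : Fin (r - 2), x (Fin.castLE hk i)) * (t - ∑ i, x i) ^ 0) := by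
        refine setLIntegral_mono' hS fun x hx => ?_
        rw [← ofReal_mul (by positivity)]
        exact ofReal_le_ofReal (hf x hx).2
    _ = ENNReal.ofReal (C * (t ^ (l + (r - 2)) / (l + (r - 2))!)) := by
        rw [lintegral_const_mul' _ _ ofReal_ne_top, lintegral_simplexSet_prod_mul_pow ht hk,
          ← ofReal_mul (by positivity)]
        simp [div_eq_inv_mul]

lemma Afun_le (β : ℝ) {t : ℝ} (ht : 0 < t) {l r : ℕ} (hr1 : 1 ≤ r) (hr2 : r ≤ l + 1) :
    Afun β t l r ≤ Real.exp (β ^ 2 * t) * l ! * ((β ^ 2 * t) ^ (r - 2) / (l + (r - 2))!) := by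
  rcases Nat.eq_zero_or_pos l with rfl | hl
  · obtain rfl : r = 1 := by omega
    simp [Afun]
  rw [Afun, if_neg hl.ne']
  calc (l ! : ℝ) / t ^ l * Iint β t l r
      ≤ l ! / t ^ l *
          ((β ^ 2) ^ (r - 2) * Real.exp (β ^ 2 * t) * (t ^ (l + (r - 2)) / (l + (r - 2))!)) := by
        gcongr
        exact Iint_le β ht hr1 hr2
    _ = Real.exp (β ^ 2 * t) * l ! * ((β ^ 2 * t) ^ (r - 2) / (l + (r - 2))!) := by
        rw [pow_add, mul_pow]
        field_simp

lemma pow_div_factorial_le {c q : ℝ} (hc : 1 ≤ c) (hq : 2 ≤ q) {l r : ℕ} (hr1 : 1 ≤ r)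
    (hr2 : r ≤ l + 1) :
    q ^ (r - 2) / (l + (r - 2))! ≤ c * ((l : ℝ) + 1) ^ 2 * q ^ r / (l + r)! := by
  obtain rfl | ⟨k, rfl⟩ : r = 1 ∨ ∃ k, r = k + 2 := by
    rcases r with _ | _ | k <;> simp_all
  · have hcq : 1 ≤ c * (l + 1) * q :=
      one_le_mul_of_one_le_of_one_le (one_le_mul_of_one_le_of_one_le hc (by simp)) (by linarith)
    rw [Nat.factorial_succ, Nat.cast_mul, show 1 - 2 = 0 from rfl, pow_zero, pow_one, Nat.add_zero,
      div_le_div_iff₀ (by positivity) (by positivity)]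
    push_cast
    calc 1 * (((l : ℝ) + 1) * l !) ≤ c * (l + 1) * q * ((l + 1) * l !) := by gcongr
      _ = c * (l + 1) ^ 2 * q * l ! := by ring
  · have hkl : (k : ℝ) + 1 ≤ l := by exact_mod_cast (by omega : k + 1 ≤ l)
    rw [Nat.add_sub_cancel, div_le_div_iff₀ (by positivity) (by positivity),
      show l + (k + 2) = l + k + 1 + 1 by ring, Nat.factorial_succ, Nat.factorial_succ]
    push_cast
    have hcq : 4 ≤ c * q ^ 2 := by nlinarith
    have hgrowth : ((l : ℝ) + k + 1 + 1) * (l + k + 1) ≤ c * (l + 1) ^ 2 * q ^ 2 := by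
      nlinarith
    calc q ^ k * (((l : ℝ) + k + 1 + 1) * ((l + k + 1) * (l + k)!))
        = (q ^ k * (l + k)!) * ((l + k + 1 + 1) * (l + k + 1)) := by ring
      _ ≤ (q ^ k * (l + k)!) * (c * (l + 1) ^ 2 * q ^ 2) := by gcongr
      _ = c * (l + 1) ^ 2 * q ^ (k + 2) * (l + k)! := by ring

theorem stmt7_general (β : ℝ) (hβ0 : 0 < β) :
    ∃ c : ℝ, 0 < c ∧
      ∀ t : ℝ, c ≤ t → ∀ l r : ℕ, 1 ≤ r → r ≤ l + 1 →
        Afun β t l r ≤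
          c * ((l : ℝ) + 1) ^ 2 * Real.exp (β ^ 2 * t) * β ^ (2 * r) * t ^ r *
            (l.factorial : ℝ) / ((l + r).factorial : ℝ) := by
  set c := 1 + 2 / β ^ 2
  have hc : 1 ≤ c := le_add_of_nonneg_right (by positivity)
  refine ⟨c, by positivity, fun t ht l r hr1 hr2 => ?_⟩
  have hq : 2 ≤ β ^ 2 * t := by
    calc (2 : ℝ) ≤ β ^ 2 * c := by simp only [c]; field_simp; nlinarith
      _ ≤ β ^ 2 * t := by gcongr
  calc Afun β t l r
      ≤ Real.exp (β ^ 2 * t) * l ! * ((β ^ 2 * t) ^ (r - 2) / (l + (r - 2))!) :=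
        Afun_le β (by linarith) hr1 hr2
    _ ≤ Real.exp (β ^ 2 * t) * l ! * (c * ((l : ℝ) + 1) ^ 2 * (β ^ 2 * t) ^ r / (l + r)!) :=
        mul_le_mul_of_nonneg_left (pow_div_factorial_le hc hq hr1 hr2) (by positivity)
    _ = _ := by
        rw [mul_pow, ← pow_mul]
        ring

/-- Lemma 4.3: `A(t,l,r) ≲ (l+1)² e^{β² t} β^{2r} t^r / ((l+1)⋯(l+r))`. -/
theorem stmt7 (β : ℝ) (hβ0 : 0 < β) (hβ1 : β < 1) :
    ∃ c : ℝ, 0 < c ∧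
      ∀ t : ℝ, c ≤ t → ∀ l r : ℕ, 1 ≤ r → r ≤ l + 1 →
        Afun β t l r ≤
          c * ((l : ℝ) + 1) ^ 2 * Real.exp (β ^ 2 * t) * β ^ (2 * r) * t ^ r *
            (l.factorial : ℝ) / ((l + r).factorial : ℝ) :=
  stmt7_general β hβ0
end
end

section
/- Let ν ∈ (1/2,1), δ ∈ (0,1), ν₀ ∈ (0, δ/2), κ ∈ (0,δ) and κ̂ ∈ (0,ν). There exists c > 0 such that for all real t ≥ c the following two bounds hold: (i) t^{l+r}/(l+r)! ≤ c t^{−1/2} (e/κ)^{δ t} for all integers l, r with 0 ≤ l ≤ ν₀ t and 1 ≤ r ≤ l + 1; (ii) t^l/l! ≤ c t^{−1/2} (e/κ̂)^{ν t} for all integers l with ν₀ t < l ≤ ν t. (Lemma 4.4.) -/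
/-!
Since `n ^ n ≤ eⁿ n!`, we have `t ^ n / n! ≤ (e t / n) ^ n`, and `x ↦ (e t / x) ^ x` increases on
`(0, t]`. Hence for `n ≤ a t` with `a ≤ 1` the quotient is at most
`(e / a) ^ (a t) = (b / a) ^ (a t) (e / b) ^ (a t)`, and for `b < a` the exponentially small factor
`(b / a) ^ (a t)` beats `t ^ (-1/2)` once `t` is large. In (i), `l + r ≤ 2 ν₀ t + 1 ≤ δ t` for
large `t`.
-/

open Real Filter

lemma pow_div_factorial_le_exp_one_mul_div_pow {t : ℝ} (ht : 0 ≤ t) (n : ℕ) :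
    t ^ n / n.factorial ≤ (exp 1 * t / n) ^ n := by
  have hnn : (0 : ℝ) < (n : ℝ) ^ n := by exact_mod_cast Nat.pow_self_pos
  have hfact : (n : ℝ) ^ n / n.factorial ≤ exp 1 ^ n := by
    rw [← exp_nat_mul, mul_one]
    exact pow_div_factorial_le_exp _ n.cast_nonneg n
  calc t ^ n / n.factorial = (t / n) ^ n * ((n : ℝ) ^ n / n.factorial) := by
        rw [div_pow]; field_simp
    _ ≤ (t / n) ^ n * exp 1 ^ n := by gcongr
    _ = (exp 1 * t / n) ^ n := by rw [← mul_pow]; ring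

lemma rpow_exp_one_mul_div_self_le {x y t : ℝ} (hx : 0 < x) (hxy : x ≤ y) (hyt : y ≤ t) :
    (exp 1 * t / x) ^ x ≤ (exp 1 * t / y) ^ y := by
  have hy : 0 < y := hx.trans_le hxy
  have ht : 0 < t := hy.trans_le hyt
  rw [rpow_def_of_pos (by positivity), rpow_def_of_pos (by positivity), exp_le_exp,
    log_div (by positivity) hx.ne', log_div (by positivity) hy.ne', log_mul (exp_ne_zero 1) ht.ne',
    log_exp]
  -- `x log (y / x) ≤ y - x`, and the remaining difference is `(y - x) (log t - log y) ≥ 0`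
  have hlog : x * (log y - log x) ≤ y - x := by
    have := mul_le_mul_of_nonneg_left (log_le_sub_one_of_pos (div_pos hy hx)) hx.le
    rwa [log_div hy.ne' hx.ne', mul_sub_one, mul_div_cancel₀ _ hx.ne'] at this
  have hyt' : log y ≤ log t := log_le_log hy hyt
  nlinarith

lemma eventually_rpow_mul_le_rpow_neg {q a : ℝ} (hq0 : 0 < q) (hq1 : q < 1) (ha : 0 < a)
    (s : ℝ) : ∀ᶠ t in atTop, q ^ (a * t) ≤ t ^ (-s) := by
  have hdecay := tendsto_rpow_mul_exp_neg_mul_atTop_nhds_zero s (a * -log q)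
    (mul_pos ha (neg_pos.2 (log_neg hq0 hq1)))
  filter_upwards [hdecay.eventually (ge_mem_nhds zero_lt_one), eventually_gt_atTop 0]
    with t hle ht
  rw [rpow_neg ht.le, ← one_div, le_div_iff₀ (by positivity), rpow_def_of_pos hq0]
  convert hle using 1
  rw [mul_comm]
  ring_nf

lemma eventually_pow_div_factorial_le {a b : ℝ} (hb : 0 < b) (hba : b < a) (ha : a ≤ 1) :
    ∀ᶠ t in atTop, ∀ n : ℕ, 0 < n → (n : ℝ) ≤ a * t →
      t ^ n / n.factorial ≤ t ^ (-(1 / 2) : ℝ) * (exp 1 / b) ^ (a * t) := by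
  have ha0 : 0 < a := hb.trans hba
  filter_upwards [eventually_rpow_mul_le_rpow_neg (div_pos hb ha0) ((div_lt_one ha0).2 hba) ha0
    (1 / 2), eventually_gt_atTop 0] with t hdecay ht n hn hna
  calc t ^ n / n.factorial ≤ (exp 1 * t / n) ^ (n : ℝ) := by
        rw [rpow_natCast]; exact pow_div_factorial_le_exp_one_mul_div_pow ht.le n
    _ ≤ (exp 1 * t / (a * t)) ^ (a * t) :=
        rpow_exp_one_mul_div_self_le (by exact_mod_cast hn) hna (by nlinarith)
    _ = (b / a) ^ (a * t) * (exp 1 / b) ^ (a * t) := by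
        rw [← mul_rpow (by positivity) (by positivity)]
        congr 1
        field_simp
    _ ≤ t ^ (-(1 / 2) : ℝ) * (exp 1 / b) ^ (a * t) := by gcongr

theorem stmt9_general (ν δ ν₀ κ κ' : ℝ)
    (hν1 : ν < 1) (hδ1 : δ < 1)
    (hν₀0 : 0 < ν₀) (hν₀1 : ν₀ < δ / 2)
    (hκ0 : 0 < κ) (hκ1 : κ < δ) (hκ'0 : 0 < κ') (hκ'1 : κ' < ν) :
    ∃ c : ℝ, 0 < c ∧
      ∀ t : ℝ, c ≤ t →
        (∀ l r : ℕ, (l : ℝ) ≤ ν₀ * t → 1 ≤ r → r ≤ l + 1 →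
          t ^ (l + r) / (((l + r).factorial : ℝ)) ≤
            c * t ^ (-(1 / 2) : ℝ) * (Real.exp 1 / κ) ^ (δ * t)) ∧
        (∀ l : ℕ, ν₀ * t < (l : ℝ) → (l : ℝ) ≤ ν * t →
          t ^ l / ((l.factorial : ℝ)) ≤
            c * t ^ (-(1 / 2) : ℝ) * (Real.exp 1 / κ') ^ (ν * t)) := by
  obtain ⟨T, hT⟩ := eventually_atTop.1 <|
    (eventually_pow_div_factorial_le hκ0 hκ1 hδ1.le).and <|
    (eventually_pow_div_factorial_le hκ'0 hκ'1 hν1.le).and <|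
    eventually_ge_atTop (1 / (δ - 2 * ν₀))
  refine ⟨max T 1, by positivity, fun t ht ↦ ?_⟩
  obtain ⟨hsmall, hlarge, hgap⟩ := hT t (le_of_max_le_left ht)
  have hc : 1 ≤ max T 1 := le_max_right T 1
  have ht0 : 0 < t := zero_lt_one.trans_le (hc.trans ht)
  -- `t ≥ 1 / (δ - 2 ν₀)` is what makes `l + r ≤ 2 ν₀ t + 1` at most `δ t`
  have hgap' : 1 ≤ (δ - 2 * ν₀) * t := by
    rwa [div_le_iff₀' (by linarith)] at hgap
  refine ⟨fun l r hl hr hrl ↦ ?_, fun l hl hlν ↦ ?_⟩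
  · have hlr : ((l + r : ℕ) : ℝ) ≤ δ * t := by
      have : (r : ℝ) ≤ l + 1 := by exact_mod_cast hrl
      push_cast
      nlinarith
    rw [mul_assoc]
    exact (hsmall (l + r) (by omega) hlr).trans (le_mul_of_one_le_left (by positivity) hc)
  · have hl0 : 0 < l := by exact_mod_cast (mul_pos hν₀0 ht0).trans hl
    rw [mul_assoc]
    exact (hlarge l hl0 hlν).trans (le_mul_of_one_le_left (by positivity) hc)

/-- Lemma 4.4: elementary factorial bounds. -/
theorem stmt9 (ν δ ν₀ κ κ' : ℝ)
    (hν0 : 1 / 2 < ν) (hν1 : ν < 1) (hδ0 : 0 < δ) (hδ1 : δ < 1)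
    (hν₀0 : 0 < ν₀) (hν₀1 : ν₀ < δ / 2)
    (hκ0 : 0 < κ) (hκ1 : κ < δ) (hκ'0 : 0 < κ') (hκ'1 : κ' < ν) :
    ∃ c : ℝ, 0 < c ∧
      ∀ t : ℝ, c ≤ t →
        (∀ l r : ℕ, (l : ℝ) ≤ ν₀ * t → 1 ≤ r → r ≤ l + 1 →
          t ^ (l + r) / (((l + r).factorial : ℝ)) ≤
            c * t ^ (-(1 / 2) : ℝ) * (Real.exp 1 / κ) ^ (δ * t)) ∧
        (∀ l : ℕ, ν₀ * t < (l : ℝ) → (l : ℝ) ≤ ν * t →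
          t ^ l / ((l.factorial : ℝ)) ≤
            c * t ^ (-(1 / 2) : ℝ) * (Real.exp 1 / κ') ^ (ν * t)) :=
  stmt9_general ν δ ν₀ κ κ' hν1 hδ1 hν₀0 hν₀1 hκ0 hκ1 hκ'0 hκ'1
end
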